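/- Let G be a simple graph on a finite vertex set V and let α be a positive integer. Suppose the edge set of G is the union of the edge sets of α acyclic subgraphs (forests) of G. Then there exists a linear order ≺ on V such that every vertex u ∈ V has at most 2α − 1 neighbors v in G with u ≺ v. -/

import Mathlib

/-!
On `n` vertices a forest has at most `n - 1` edges, so a graph whose edges are covered by `α`
forests has at most `α (n - 1)` edges, and so has each of its induced subgraphs. By the handshake
lemma every nonempty induced subgraph therefore has a vertex of degree at most `2α - 1`, i.e. the
graph is `(2α - 1)`-degenerate. Repeatedly deleting such a vertex and ranking the vertices by the
time of their deletion gives the order: the later neighbours of a vertex are among its neighbours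
at the moment it is deleted.
-/

open Finset

namespace SimpleGraph

variable {V : Type*} (G : SimpleGraph V)

theorem IsAcyclic.card_edgeFinset_le [Fintype V] [Fintype G.edgeSet] (hG : G.IsAcyclic) :
    #G.edgeFinset ≤ Fintype.card V - 1 := by
  cases isEmpty_or_nonempty V
  · simp [eq_bot_iff_forall_not_adj]
  obtain ⟨T, hGT, -, hT⟩ := connected_top.exists_isTree_le_of_le_of_isAcyclic le_top hG
  classical
  rw [← hT.card_edgeFinset, Nat.add_sub_cancel]
  exact card_le_card (edgeFinset_mono hGT)

theorem card_edgeFinset_le_of_edgeSet_subset_iUnion [Fintype V] [DecidableRel G.Adj]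
    {ι : Type*} [Fintype ι] (F : ι → SimpleGraph V) (hF : ∀ i, (F i).IsAcyclic)
    (hcover : G.edgeSet ⊆ ⋃ i, (F i).edgeSet) :
    #G.edgeFinset ≤ Fintype.card ι * (Fintype.card V - 1) := by
  classical
  calc #G.edgeFinset ≤ #(univ.biUnion fun i => (F i).edgeFinset) :=
        card_le_card fun e he => by simpa using hcover (mem_edgeFinset.1 he)
    _ ≤ ∑ i, #(F i).edgeFinset := card_biUnion_le
    _ ≤ ∑ _i : ι, (Fintype.card V - 1) := sum_le_sum fun i _ => (hF i).card_edgeFinset_le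
    _ = Fintype.card ι * (Fintype.card V - 1) := by simp

theorem exists_degree_le_of_two_mul_card_edgeFinset_lt [Fintype V] [DecidableRel G.Adj] {k : ℕ}
    (h : 2 * #G.edgeFinset < Fintype.card V * (k + 1)) : ∃ v, G.degree v ≤ k := by
  by_contra! hdeg
  have : Fintype.card V * (k + 1) ≤ 2 * #G.edgeFinset := by
    rw [← sum_degrees_eq_twice_card_edges, ← smul_eq_mul, ← card_univ, ← sum_const]
    exact sum_le_sum fun v _ => hdeg v
  omega

theorem exists_degree_le_of_edgeSet_subset_iUnion [Fintype V] [Nonempty V] [DecidableRel G.Adj]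
    {ι : Type*} [Fintype ι] (F : ι → SimpleGraph V) (hF : ∀ i, (F i).IsAcyclic)
    (hcover : G.edgeSet ⊆ ⋃ i, (F i).edgeSet) :
    ∃ v, G.degree v ≤ 2 * Fintype.card ι - 1 := by
  apply exists_degree_le_of_two_mul_card_edgeFinset_lt
  have hE := G.card_edgeFinset_le_of_edgeSet_subset_iUnion F hF hcover
  have hV := Fintype.card_pos (α := V)
  rcases Nat.eq_zero_or_pos (Fintype.card ι) with hι | hι
  · rw [hι, zero_mul] at hE
    rw [hι]
    omega
  · calc 2 * #G.edgeFinset ≤ 2 * Fintype.card ι * (Fintype.card V - 1) := by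
          rw [mul_assoc]; exact Nat.mul_le_mul_left 2 hE
      _ < 2 * Fintype.card ι * Fintype.card V := by
          apply Nat.mul_lt_mul_of_pos_left (by omega) (by omega)
      _ = Fintype.card V * (2 * Fintype.card ι - 1 + 1) := by rw [mul_comm]; congr; omega

def IsDegenerate [DecidableRel G.Adj] (k : ℕ) : Prop :=
  ∀ s : Finset V, s.Nonempty → ∃ u ∈ s, #{v ∈ s | G.Adj u v} ≤ k

theorem isDegenerate_of_edgeSet_subset_iUnion [DecidableRel G.Adj] {ι : Type*} [Fintype ι]
    (F : ι → SimpleGraph V) (hF : ∀ i, (F i).IsAcyclic)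
    (hcover : G.edgeSet ⊆ ⋃ i, (F i).edgeSet) :
    G.IsDegenerate (2 * Fintype.card ι - 1) := by
  intro s hs
  have : Nonempty s := hs.to_subtype
  have hcover' : (G.induce s).edgeSet ⊆ ⋃ i, ((F i).induce s).edgeSet := by
    intro e he
    induction e using Sym2.ind
    simpa using hcover (show s(_, _) ∈ G.edgeSet from he)
  obtain ⟨⟨u, hu⟩, hdeg⟩ := (G.induce s).exists_degree_le_of_edgeSet_subset_iUnion
    (fun i => (F i).induce s) (fun i => (hF i).induce s) hcover'
  refine ⟨u, hu, ?_⟩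
  rw [← card_neighborFinset_eq_degree, ← card_map (.subtype (· ∈ (s : Set V)))] at hdeg
  convert hdeg using 2
  ext v
  simp [and_comm]

variable {G} [DecidableRel G.Adj] {k : ℕ}

theorem IsDegenerate.exists_injOn_rank (h : G.IsDegenerate k) (s : Finset V) :
    ∃ f : V → ℕ, Set.InjOn f s ∧ ∀ u ∈ s, #{v ∈ s | G.Adj u v ∧ f u < f v} ≤ k := by
  classical
  induction s using Finset.strongInduction with
  | H s ih =>
  rcases s.eq_empty_or_nonempty with rfl | hs
  · exact ⟨0, by simp, by simp⟩
  obtain ⟨u, hu, hdeg⟩ := h s hs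
  obtain ⟨f, hinj, hout⟩ := ih (s.erase u) (erase_ssubset hu)
  -- `u` is deleted first, so it gets the smallest rank and is nobody's later neighbour.
  set g := Function.update (fun v => f v + 1) u 0 with hg
  refine ⟨g, ?_, fun w hw => ?_⟩
  · intro a ha b hb hab
    by_cases hau : a = u <;> by_cases hbu : b = u <;>
      simp_all [hinj.eq_iff]
  by_cases hwu : w = u
  · subst hwu
    exact (card_le_card (monotone_filter_right s fun _ _ hv => hv.1)).trans hdeg
  · have : {v ∈ s | G.Adj w v ∧ g w < g v} = {v ∈ s.erase u | G.Adj w v ∧ f w < f v} := by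
      ext v
      by_cases hvu : v = u <;> simp [hg, Function.update_apply, hwu, hvu]
    rw [this]
    exact hout w (mem_erase.2 ⟨hwu, hw⟩)

theorem IsDegenerate.exists_injective_rank [Fintype V] (h : G.IsDegenerate k) :
    ∃ f : V → ℕ, f.Injective ∧ ∀ u, #{v | G.Adj u v ∧ f u < f v} ≤ k := by
  obtain ⟨f, hinj, hout⟩ := h.exists_injOn_rank univ
  exact ⟨f, fun a b hab => hinj (mem_univ a) (mem_univ b) hab, fun u => hout u (mem_univ u)⟩

end SimpleGraph

open SimpleGraph

theorem arboricity_degeneracy_order_general {V : Type*} [Fintype V] (G : SimpleGraph V)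
    (α : ℕ) (F : Fin α → SimpleGraph V)
    (hforest : ∀ i, (F i).IsAcyclic)
    (hcover : G.edgeSet = ⋃ i, (F i).edgeSet) :
    ∃ r : V → V → Prop, IsStrictTotalOrder V r ∧
      ∀ u : V, {v : V | G.Adj u v ∧ r u v}.ncard ≤ 2 * α - 1 := by
  classical
  have hdegenerate := G.isDegenerate_of_edgeSet_subset_iUnion F hforest hcover.subset
  rw [Fintype.card_fin] at hdegenerate
  obtain ⟨f, hf, hout⟩ := hdegenerate.exists_injective_rank
  refine ⟨fun u v => f u < f v, hf.isStrictTotalOrder_onFun _, fun u => ?_⟩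
  simpa [Set.ncard_eq_toFinset_card'] using hout u

theorem arboricity_degeneracy_order {V : Type*} [Fintype V] (G : SimpleGraph V)
    (α : ℕ) (hα : 0 < α) (F : Fin α → SimpleGraph V)
    (hsub : ∀ i, F i ≤ G) (hforest : ∀ i, (F i).IsAcyclic)
    (hcover : G.edgeSet = ⋃ i, (F i).edgeSet) :
    ∃ r : V → V → Prop, IsStrictTotalOrder V r ∧
      ∀ u : V, {v : V | G.Adj u v ∧ r u v}.ncard ≤ 2 * α - 1 :=
  arboricity_degeneracy_order_general G α F hforest hcover
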